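/- arXiv:1903.05487 — 5 statements merged into one kernel-verified Lean document; each statement's English description precedes it below -/
import Mathlib

section
/- For an odd primitive Dirichlet character χ mod an odd prime q, L'/L(0,χ) = log(2π/q) + γ - L'/L(1, χ̄), where γ is the Euler–Mascheroni constant. -/
/-!
For odd `χ` the completed L-function is `Λ(s, χ) = Γℝ(s + 1) L(s, χ)`. Taking logarithmic
derivatives of the functional equation `Λ(1 - s, χ) = ε q^(s - 1/2) Λ(s, χ̄)` at `s = 1` gives
`-Λ'/Λ(0, χ) = log q + Λ'/Λ(1, χ̄)`; the nonvanishing of `L(0, χ)` needed here also comes from the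
functional equation and `L(1, χ̄) ≠ 0`. Splitting off the Gamma factors leaves the constant
`Γℝ'/Γℝ(1) + Γℝ'/Γℝ(2) = -(γ + log 2π)`, which follows from `ψ(1/2) = -γ - 2 log 2` and `ψ(1) = -γ`.
-/

open Real

namespace Complex

lemma logDeriv_const_cpow {c : ℂ} (hc : c ≠ 0) (s : ℂ) :
    logDeriv (fun z : ℂ => c ^ z) s = log c := by
  rw [logDeriv_apply, (hasStrictDerivAt_const_cpow (Or.inl hc)).hasDerivAt.deriv,
    mul_div_cancel_left₀ _ (cpow_ne_zero_iff.mpr (Or.inl hc))]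

lemma logDeriv_Gammaℝ {s : ℂ} (hs : 0 < s.re) :
    logDeriv Gammaℝ s = (digamma (s / 2) - log π) / 2 := by
  have hπ : (π : ℂ) ≠ 0 := ofReal_ne_zero.mpr pi_ne_zero
  have hhalf : HasDerivAt (fun z : ℂ => z / 2) (1 / 2) s := (hasDerivAt_id s).div_const 2
  have hneg : HasDerivAt (fun z : ℂ => -z / 2) (-1 / 2) s := (hasDerivAt_neg s).div_const 2
  have hGamma : DifferentiableAt ℂ Gamma (s / 2) := by
    refine differentiableAt_Gamma _ fun m hm => ?_
    have := congrArg re hm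
    simp only [div_ofNat_re, neg_re, natCast_re] at this
    linarith [m.cast_nonneg (α := ℝ)]
  have hpow : logDeriv (fun z : ℂ => (π : ℂ) ^ (-z / 2)) s = -log π / 2 := by
    change logDeriv ((fun z : ℂ => (π : ℂ) ^ z) ∘ fun z : ℂ => -z / 2) s = _
    rw [logDeriv_comp (x := s)
        (hasStrictDerivAt_const_cpow (Or.inl hπ)).hasDerivAt.differentiableAt
        hneg.differentiableAt, logDeriv_const_cpow hπ, hneg.deriv]
    ring
  have hgam : logDeriv (fun z : ℂ => Gamma (z / 2)) s = digamma (s / 2) / 2 := by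
    change logDeriv (Gamma ∘ fun z : ℂ => z / 2) s = _
    rw [logDeriv_comp (x := s) hGamma hhalf.differentiableAt, hhalf.deriv, digamma_def]
    ring
  rw [show Gammaℝ = fun z => (π : ℂ) ^ (-z / 2) * Gamma (z / 2) from funext Gammaℝ_def,
    logDeriv_mul (f := fun z : ℂ => (π : ℂ) ^ (-z / 2)) (g := fun z : ℂ => Gamma (z / 2)) s
      (cpow_ne_zero_iff.mpr (Or.inl hπ)) (Gamma_ne_zero_of_re_pos (by simpa using hs))
      (hneg.const_cpow (Or.inl hπ)).differentiableAt (hGamma.comp s hhalf.differentiableAt),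
    hpow, hgam]
  ring

lemma logDeriv_Gammaℝ_one_add_logDeriv_Gammaℝ_two :
    logDeriv Gammaℝ 1 + logDeriv Gammaℝ 2 = -(eulerMascheroniConstant + log (2 * π)) := by
  rw [logDeriv_Gammaℝ (by norm_num), logDeriv_Gammaℝ (by norm_num), div_self two_ne_zero,
    digamma_one, digamma_one_half, log_mul_ofReal _ pi_pos _ two_ne_zero, ofReal_log pi_pos.le]
  ring

lemma log_div_natCast {x : ℂ} (hx : x ≠ 0) {n : ℕ} (hn : n ≠ 0) :
    log (x / n) = log x - log n := by
  rw [div_eq_mul_inv, ← ofReal_natCast, ← ofReal_inv,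
    log_mul_ofReal _ (inv_pos.mpr (Nat.cast_pos.mpr (Nat.pos_of_ne_zero hn))) _ hx, Real.log_inv,
    ofReal_neg, ofReal_natCast, natCast_log]
  ring

end Complex

namespace DirichletCharacter

open Complex Filter Topology

section Parity

variable {S : Type*} [CommRing S] {N : ℕ} {χ : DirichletCharacter S N}

lemma Odd.inv (hχ : χ.Odd) : χ⁻¹.Odd := by
  rw [DirichletCharacter.Odd, MulChar.inv_apply_eq_inv, hχ]
  simpa using Ring.inverse_unit (-1 : Sˣ)

lemma Odd.ne_one [NeZero (2 : S)] (hχ : χ.Odd) : χ ≠ 1 := by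
  rintro rfl
  exact hχ.not_even _ (MulChar.one_apply isUnit_one.neg)

end Parity

lemma isPrimitive_of_prime {R : Type*} [CommMonoidWithZero R] {p : ℕ} (hp : p.Prime)
    {χ : DirichletCharacter R p} (hχ : χ ≠ 1) : χ.IsPrimitive := by
  have : NeZero p := ⟨hp.ne_zero⟩
  refine (hp.eq_one_or_self_of_dvd _ χ.conductor_dvd_level).resolve_left fun h => hχ ?_
  exact eq_one_iff_conductor_eq_one.mpr h

lemma rootNumber_ne_zero_of_prime {p : ℕ} [NeZero p] (hp : p.Prime) {χ : DirichletCharacter ℂ p}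
    (hχ : χ ≠ 1) : rootNumber χ ≠ 0 := by
  have : Fact p.Prime := ⟨hp⟩
  have hp0 : (p : ℂ) ≠ 0 := Nat.cast_ne_zero.mpr hp.ne_zero
  have hgauss : gaussSum χ ZMod.stdAddChar ≠ 0 :=
    gaussSum_ne_zero_of_nontrivial (by simpa [ZMod.card] using hp0) hχ
      (ZMod.isPrimitive_stdAddChar p)
  rw [rootNumber]
  exact div_ne_zero (div_ne_zero hgauss (pow_ne_zero _ I_ne_zero))
    (cpow_ne_zero_iff.mpr (Or.inl hp0))

variable {N : ℕ} [NeZero N] {χ : DirichletCharacter ℂ N}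

lemma Odd.completedLFunction_eq_mul (hχ : χ.Odd) {s : ℂ} (hs : -1 < s.re) :
    completedLFunction χ s = LFunction χ s * Gammaℝ (s + 1) := by
  have hΓ : Gammaℝ (s + 1) ≠ 0 := Gammaℝ_ne_zero_of_re_pos (by rw [add_re, one_re]; linarith)
  rw [LFunction, ZMod.LFunction_eq_completed_div_gammaFactor_odd hχ.to_fun, div_mul_cancel₀ _ hΓ,
    completedLFunction]

lemma Odd.logDeriv_completedLFunction (hχ : χ.Odd) {s : ℂ} (hs : -1 < s.re)
    (hL : LFunction χ s ≠ 0) :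
    logDeriv (completedLFunction χ) s = logDeriv (LFunction χ) s + logDeriv Gammaℝ (s + 1) := by
  have hΓ : Gammaℝ (s + 1) ≠ 0 := Gammaℝ_ne_zero_of_re_pos (by rw [add_re, one_re]; linarith)
  have hΓd : DifferentiableAt ℂ Gammaℝ (s + 1) := by
    simpa [Pi.inv_def] using (differentiable_Gammaℝ_inv (s + 1)).inv (inv_ne_zero hΓ)
  have hshift : HasDerivAt (fun z : ℂ => z + 1) 1 s := (hasDerivAt_id s).add_const 1
  have hΓshiftd : DifferentiableAt ℂ (fun z => Gammaℝ (z + 1)) s :=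
    DifferentiableAt.comp (g := Gammaℝ) s hΓd hshift.differentiableAt
  have hEq : completedLFunction χ =ᶠ[𝓝 s] fun z => LFunction χ z * Gammaℝ (z + 1) :=
    eventually_of_mem ((isOpen_lt continuous_const continuous_re).mem_nhds hs)
      fun z hz => hχ.completedLFunction_eq_mul hz
  have hΓshift : logDeriv (fun z => Gammaℝ (z + 1)) s = logDeriv Gammaℝ (s + 1) := by
    change logDeriv (Gammaℝ ∘ fun z : ℂ => z + 1) s = _
    rw [logDeriv_comp (x := s) hΓd hshift.differentiableAt, hshift.deriv, mul_one]
  rw [(logDeriv_congr_nhds hEq).eq_of_nhds,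
    logDeriv_mul (f := LFunction χ) (g := fun z => Gammaℝ (z + 1)) s hL hΓ
    (differentiableAt_LFunction χ s (Or.inr hχ.ne_one)) hΓshiftd,
    hΓshift]

namespace IsPrimitive

variable (hχ : χ.IsPrimitive)
include hχ

lemma completedLFunction_one_sub_ne_zero (hε : rootNumber χ ≠ 0) {s : ℂ}
    (hs : completedLFunction χ⁻¹ s ≠ 0) : completedLFunction χ (1 - s) ≠ 0 := by
  rw [hχ.completedLFunction_one_sub]
  exact mul_ne_zero (mul_ne_zero (cpow_ne_zero_iff.mpr (Or.inl (NeZero.ne _))) hε) hs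

lemma logDeriv_completedLFunction_one_sub (hχ₁ : χ ≠ 1) (hε : rootNumber χ ≠ 0) {s : ℂ}
    (hs : completedLFunction χ⁻¹ s ≠ 0) :
    logDeriv (completedLFunction χ) (1 - s) =
      -(Complex.log N + logDeriv (completedLFunction χ⁻¹) s) := by
  have hN : (N : ℂ) ≠ 0 := NeZero.ne _
  have hreflect : HasDerivAt (fun z : ℂ => 1 - z) (-1) s := by
    simpa using (hasDerivAt_id s).const_sub 1
  have hshift : HasDerivAt (fun z : ℂ => z - 1 / 2) 1 s := (hasDerivAt_id s).sub_const _
  have hcpow : HasDerivAt (fun z : ℂ => (N : ℂ) ^ (z - 1 / 2)) _ s := hshift.const_cpow (Or.inl hN)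
  have hlhs : logDeriv (fun z => completedLFunction χ (1 - z)) s =
      -logDeriv (completedLFunction χ) (1 - s) := by
    change logDeriv (completedLFunction χ ∘ fun z : ℂ => 1 - z) s = _
    rw [logDeriv_comp (x := s) (differentiable_completedLFunction hχ₁ _)
      hreflect.differentiableAt, hreflect.deriv, mul_neg_one]
  have hfactor :
      logDeriv (fun z : ℂ => (N : ℂ) ^ (z - 1 / 2) * rootNumber χ) s = Complex.log N := by
    rw [logDeriv_mul_const s _ hε]
    change logDeriv ((fun z : ℂ => (N : ℂ) ^ z) ∘ fun z : ℂ => z - 1 / 2) s = _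
    rw [logDeriv_comp (x := s)
      (hasStrictDerivAt_const_cpow (Or.inl hN)).hasDerivAt.differentiableAt
      hshift.differentiableAt, logDeriv_const_cpow hN, hshift.deriv, mul_one]
  have hrhs : logDeriv (fun z => completedLFunction χ (1 - z)) s =
      Complex.log N + logDeriv (completedLFunction χ⁻¹) s := by
    rw [funext hχ.completedLFunction_one_sub,
      logDeriv_mul (f := fun z : ℂ => (N : ℂ) ^ (z - 1 / 2) * rootNumber χ)
        (g := completedLFunction χ⁻¹) s
      (mul_ne_zero (cpow_ne_zero_iff.mpr (Or.inl hN)) hε) hs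
      (hcpow.differentiableAt.mul_const _)
      (differentiable_completedLFunction (inv_ne_one.mpr hχ₁) s), hfactor]
  rw [← neg_neg (logDeriv _ _), ← hlhs, hrhs]

end IsPrimitive

end DirichletCharacter

open DirichletCharacter Complex

theorem logDeriv_L_zero_one_relation_general (q : ℕ) [NeZero q] (hq : q.Prime)
    (χ : DirichletCharacter ℂ q) (hχodd : χ.Odd) :
    deriv (DirichletCharacter.LFunction χ) 0 / DirichletCharacter.LFunction χ 0 =
      Complex.log (2 * Real.pi / q) + (Real.eulerMascheroniConstant : ℂ) -
        deriv (DirichletCharacter.LFunction (χ.ringHomComp (starRingEnd ℂ))) 1 /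
          DirichletCharacter.LFunction (χ.ringHomComp (starRingEnd ℂ)) 1 := by
  rw [show χ.ringHomComp (starRingEnd ℂ) = χ⁻¹ from MulChar.star_eq_inv χ, ← logDeriv_apply,
    ← logDeriv_apply]
  have hprim := isPrimitive_of_prime hq hχodd.ne_one
  have hε := rootNumber_ne_zero_of_prime hq hχodd.ne_one
  have hL₁ : LFunction χ⁻¹ 1 ≠ 0 :=
    LFunction_ne_zero_of_one_le_re _ (Or.inl hχodd.inv.ne_one) (by simp)
  have hΛ₁ : completedLFunction χ⁻¹ 1 ≠ 0 := by
    rw [hχodd.inv.completedLFunction_eq_mul (by norm_num)]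
    exact mul_ne_zero hL₁ (Gammaℝ_ne_zero_of_re_pos (by norm_num))
  have hL₀ : LFunction χ 0 ≠ 0 := by
    have hΛ₀ := hprim.completedLFunction_one_sub_ne_zero hε hΛ₁
    rw [sub_self, hχodd.completedLFunction_eq_mul (by norm_num)] at hΛ₀
    exact left_ne_zero_of_mul hΛ₀
  have hFE := hprim.logDeriv_completedLFunction_one_sub hχodd.ne_one hε hΛ₁
  rw [sub_self, hχodd.logDeriv_completedLFunction (by norm_num) hL₀,
    hχodd.inv.logDeriv_completedLFunction (by norm_num) hL₁, zero_add, one_add_one_eq_two] at hFE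
  rw [log_div_natCast (by simp [pi_ne_zero]) (NeZero.ne q)]
  linear_combination hFE - logDeriv_Gammaℝ_one_add_logDeriv_Gammaℝ_two

theorem logDeriv_L_zero_one_relation (q : ℕ) [NeZero q] (hq : q.Prime) (hodd : Odd q)
    (χ : DirichletCharacter ℂ q) (hχ : χ ≠ 1) (hχodd : χ.Odd) :
    deriv (DirichletCharacter.LFunction χ) 0 / DirichletCharacter.LFunction χ 0 =
      Complex.log (2 * Real.pi / q) + (Real.eulerMascheroniConstant : ℂ) -
        deriv (DirichletCharacter.LFunction (χ.ringHomComp (starRingEnd ℂ))) 1 /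
          DirichletCharacter.LFunction (χ.ringHomComp (starRingEnd ℂ)) 1 :=
  logDeriv_L_zero_one_relation_general q hq χ hχodd
end

section
/- For every x > 0, the series S(x) := 2γ₁x + (log x)² + Σ_{m=1}^{∞} ( (log(x+m))² − (log m)² − 2x (log m)/m ) converges, where γ₁ is the first Stieltjes constant. -/
/-!
Write `N = m + 1`, `t = x / N` and `u = log (1 + t)`, so that `log (N + x) = log N + u`. The
`m`-th term is then `2 log N (u - t) + u²`, and `|u - t| ≤ t²`, `u² ≤ t²`, so it is at most
`(2 log N + 1) x² / N² ≤ 5 x² N^(-3/2)`, using `log N ≤ 2 √N`.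
-/

open Real

lemma Real.log_one_add_le_self {t : ℝ} (ht : -1 < t) : log (1 + t) ≤ t := by
  linarith [log_le_sub_one_of_pos (x := 1 + t) (by linarith)]

lemma Real.abs_log_one_add_sub_self_le_sq {t : ℝ} (ht : 0 ≤ t) : |log (1 + t) - t| ≤ t ^ 2 := by
  have lower : t - t ^ 2 ≤ log (1 + t) := by
    refine le_trans ?_ (le_log_one_add_of_nonneg ht)
    rw [le_div_iff₀ (by linarith)]
    nlinarith [mul_nonneg ht (sq_nonneg t)]
  rw [abs_le]
  constructor <;> nlinarith [log_one_add_le_self (t := t) (by linarith)]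

lemma Real.abs_log_add_sq_sub_le {N x : ℝ} (hN : 0 < N) (hx : 0 ≤ x) :
    |log (N + x) ^ 2 - log N ^ 2 - 2 * x * log N / N| ≤ (2 * |log N| + 1) * (x / N) ^ 2 := by
  set t := x / N
  set u := log (1 + t)
  have ht : 0 ≤ t := by positivity
  have hxt : x = N * t := by simp only [t]; field_simp
  have hlog : log (N + x) = log N + u := by
    rw [← log_mul hN.ne' (by positivity), hxt]
    ring_nf
  have hu : |u - t| ≤ t ^ 2 := abs_log_one_add_sub_self_le_sq ht
  have hu_sq : u ^ 2 ≤ t ^ 2 :=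
    pow_le_pow_left₀ (log_nonneg (by linarith)) (log_one_add_le_self (by linarith)) 2
  have hexpand :
      log (N + x) ^ 2 - log N ^ 2 - 2 * x * log N / N = 2 * log N * (u - t) + u ^ 2 := by
    rw [hlog, hxt]
    field_simp
    ring
  calc |log (N + x) ^ 2 - log N ^ 2 - 2 * x * log N / N|
      = |2 * log N * (u - t) + u ^ 2| := by rw [hexpand]
    _ ≤ 2 * |log N| * |u - t| + u ^ 2 := by
        grw [abs_add_le, abs_mul, abs_mul, abs_two, abs_sq]
    _ ≤ (2 * |log N| + 1) * t ^ 2 := by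
        grw [hu, hu_sq]
        linarith

lemma Real.two_mul_log_add_one_le_rpow {N : ℝ} (hN : 1 ≤ N) :
    2 * log N + 1 ≤ 5 * N ^ (1 / 2 : ℝ) := by
  have hlog : log N ≤ N ^ (1 / 2 : ℝ) / (1 / 2) := log_le_rpow_div (by linarith) (by norm_num)
  have hone : 1 ≤ N ^ (1 / 2 : ℝ) := one_le_rpow hN (by norm_num)
  linarith

theorem deninger_S_series_summable (x : ℝ) (hx : 0 < x) :
    Summable (fun m : ℕ =>
      (Real.log (x + (m + 1))) ^ 2 - (Real.log (m + 1)) ^ 2 -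
        2 * x * Real.log (m + 1) / (m + 1)) := by
  have hmaj : Summable fun m : ℕ => 5 * x ^ 2 * ((m + 1 : ℕ) : ℝ) ^ (-(3 / 2) : ℝ) :=
    ((summable_nat_add_iff 1).2 (summable_nat_rpow.2 (by norm_num))).mul_left _
  refine hmaj.of_norm_bounded fun m => ?_
  set N : ℝ := ((m + 1 : ℕ) : ℝ)
  have hN : 1 ≤ N := by simp [N]
  have hN0 : 0 < N := by linarith
  calc ‖log (x + (m + 1)) ^ 2 - log (m + 1) ^ 2 - 2 * x * log (m + 1) / (m + 1)‖
      = |log (N + x) ^ 2 - log N ^ 2 - 2 * x * log N / N| := by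
        simp only [N, Real.norm_eq_abs, add_comm x]; push_cast; rfl
    _ ≤ (2 * log N + 1) * (x / N) ^ 2 := by
        simpa [abs_of_nonneg (log_nonneg hN)] using abs_log_add_sq_sub_le hN0 hx.le
    _ ≤ 5 * N ^ (1 / 2 : ℝ) * (x / N) ^ 2 := by grw [two_mul_log_add_one_le_rpow hN]
    _ = 5 * x ^ 2 * N ^ (-(3 / 2) : ℝ) := by
        rw [show (-(3 / 2) : ℝ) = 1 / 2 - (2 : ℕ) by norm_num, rpow_sub hN0, rpow_natCast]
        ring
end

section
/- For 0 < x < 1, S(x) + S(1−x) = (log x)² + Σ_{n=1}^{∞} ( (log(n+x))² + (log(n−x))² − 2(log n)² ). -/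
open Finset Real Filter

/-- Deninger's function `S`, depending on the first Stieltjes constant `γ₁`. -/
noncomputable def deningerS (γ₁ : ℝ) (x : ℝ) : ℝ :=
  2 * γ₁ * x + (Real.log x) ^ 2 +
    ∑' m : ℕ, ((Real.log (x + (m + 1))) ^ 2 - (Real.log (m + 1)) ^ 2 -
      2 * x * Real.log (m + 1) / (m + 1))

lemma log1p_err {s : ℝ} (hs : |s| ≤ 1/2) : |Real.log (1+s) - s| ≤ 2 * s^2 := by
  have h : |(-s)| < 1 := by rw [abs_neg]; linarith
  have h1 := Real.abs_log_sub_add_sum_range_le h 1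
  simp only [Finset.sum_range_one, pow_one, Nat.cast_zero, zero_add, div_one, abs_neg] at h1
  rw [show (1 : ℝ) - -s = 1 + s by ring,
    show (-s) + Real.log (1+s) = Real.log (1+s) - s by ring] at h1
  have h4 : |s|^(1+1) / (1 - |s|) ≤ 2 * s^2 := by
    rw [div_le_iff₀ (by linarith [abs_nonneg s])]
    have hsq : |s|^(1+1) = s^2 := by rw [sq_abs]
    nlinarith [sq_nonneg s, abs_nonneg s, mul_nonneg (sq_nonneg s) (by linarith : (0:ℝ) ≤ 1 - 2*|s|)]
  linarith

noncomputable def dcT (t : ℝ) (m : ℕ) : ℝ :=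
  (Real.log (t + (m + 1))) ^ 2 - (Real.log (m + 1)) ^ 2 - 2 * t * Real.log (m + 1) / (m + 1)

set_option maxHeartbeats 1000000 in
lemma dc_bound' {t M : ℝ} (ht : |t| ≤ 1) (hM : 2 ≤ M) :
    |(Real.log (t+M))^2 - (Real.log M)^2 - 2*t*Real.log M/M| ≤ 12 * M ^ (-(3/2) : ℝ) := by
  have hM0 : (0:ℝ) < M := by linarith
  obtain ⟨r, hr⟩ : ∃ r : ℝ, r = 1/M := ⟨1/M, rfl⟩
  have hr0 : 0 < r := by rw [hr]; positivity
  have hrM : r * M = 1 := by rw [hr]; field_simp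
  have hr2 : r ≤ 1/2 := by rw [hr, div_le_div_iff₀ hM0 (by norm_num)]; linarith
  have hts : t / M = t * r := by rw [hr]; ring
  have hs1 : |t * r| ≤ r := by
    rw [abs_mul, abs_of_pos hr0]
    nlinarith [abs_nonneg t]
  have hs : |t * r| ≤ 1/2 := hs1.trans hr2
  have hE := log1p_err hs
  have hs2 : (t*r)^2 ≤ r^2 := by nlinarith [sq_abs (t*r), abs_nonneg (t*r)]
  have hE2 : |Real.log (1 + t*r) - t*r| ≤ 2 * r^2 := by nlinarith
  have h1s : 0 < 1 + t*r := by rcases abs_le.1 hs with ⟨h, _⟩; linarith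
  have hlog : Real.log (t + M) = Real.log M + Real.log (1 + t*r) := by
    rw [show t + M = M * (1 + t*r) by rw [hr]; field_simp; ring,
      Real.log_mul (ne_of_gt hM0) (ne_of_gt h1s)]
  have hlogM0 : 0 ≤ Real.log M := Real.log_nonneg (by linarith)
  have hlogM : Real.log M ≤ 2 * Real.sqrt M := by
    have h := Real.log_le_sub_one_of_pos (Real.sqrt_pos.2 hM0)
    have h2 : Real.log (Real.sqrt M) = Real.log M / 2 := Real.log_sqrt (le_of_lt hM0)
    have h3 : 0 ≤ Real.sqrt M := Real.sqrt_nonneg M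
    linarith
  obtain ⟨u, hu⟩ : ∃ u : ℝ, u = Real.log (1 + t*r) := ⟨_, rfl⟩
  rw [← hu] at hlog hE2
  have hdc : (Real.log (t+M))^2 - (Real.log M)^2 - 2*t*Real.log M/M
      = 2 * Real.log M * (u - t*r) + u^2 := by
    rw [hlog, div_eq_mul_inv, show M⁻¹ = r by rw [hr]; field_simp]
    ring
  have huabs : |u| ≤ 2 * r := by
    calc |u| = |(u - t*r) + t*r| := by ring_nf
      _ ≤ |u - t*r| + |t*r| := abs_add_le _ _
      _ ≤ 2*r^2 + r := by linarith
      _ ≤ 2*r := by nlinarith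
  have hu2 : u^2 ≤ 4 * r^2 := by nlinarith [sq_abs u, abs_nonneg u]
  have hsqrt1 : 1 ≤ Real.sqrt M := by
    rw [show (1:ℝ) = Real.sqrt 1 by simp]
    exact Real.sqrt_le_sqrt (by linarith)
  have key : |2 * Real.log M * (u - t*r) + u^2| ≤ 12 * Real.sqrt M * r^2 := by
    calc |2 * Real.log M * (u - t*r) + u^2|
        ≤ |2 * Real.log M * (u - t*r)| + |u^2| := abs_add_le _ _
      _ = 2 * Real.log M * |u - t*r| + u^2 := by
          rw [abs_mul, abs_of_nonneg (by linarith : (0:ℝ) ≤ 2 * Real.log M),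
            abs_of_nonneg (sq_nonneg u)]
      _ ≤ 2 * (2*Real.sqrt M) * (2 * r^2) + 4 * r^2 := by
          nlinarith [mul_le_mul_of_nonneg_left hE2 (by linarith : (0:ℝ) ≤ 2 * Real.log M),
            mul_le_mul_of_nonneg_right hlogM (abs_nonneg (u - t*r)),
            mul_nonneg hlogM0 (abs_nonneg (u - t*r)), sq_nonneg r]
      _ ≤ 12 * Real.sqrt M * r^2 := by nlinarith [sq_nonneg r]
  have h2 : ((1/M)^2 : ℝ) = M ^ (-2 : ℝ) := by
    rw [Real.rpow_neg hM0.le, Real.rpow_two, one_div, inv_pow]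
  have hrw : 12 * Real.sqrt M * r^2 = 12 * M ^ (-(3/2) : ℝ) := by
    rw [hr, Real.sqrt_eq_rpow, h2, mul_assoc, ← Real.rpow_add hM0]
    norm_num
  rw [hdc]
  calc |2 * Real.log M * (u - t*r) + u^2| ≤ 12 * Real.sqrt M * r^2 := key
    _ = 12 * M ^ (-(3/2) : ℝ) := hrw

lemma dc_bound {t : ℝ} (ht : |t| ≤ 1) {m : ℕ} (hm : 1 ≤ m) :
    |dcT t m| ≤ 12 * ((m:ℝ)+1) ^ (-(3/2) : ℝ) := by
  have hM : (2:ℝ) ≤ (m:ℝ) + 1 := by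
    have : (1:ℝ) ≤ (m:ℝ) := by exact_mod_cast hm
    linarith
  exact dc_bound' ht hM

lemma dc_summable {t : ℝ} (ht : |t| ≤ 1) : Summable (dcT t) := by
  have hg : Summable (fun m : ℕ => 12 * (((m:ℝ)+1) ^ (-(3/2) : ℝ))) := by
    apply Summable.mul_left
    have h0 : Summable (fun n : ℕ => (n:ℝ) ^ (-(3/2) : ℝ)) :=
      Real.summable_nat_rpow.mpr (by norm_num)
    have h1 := (summable_nat_add_iff 1).2 h0
    refine h1.congr fun n => ?_
    push_cast
    rfl
  apply Summable.of_norm_bounded_eventually_nat hg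
  filter_upwards [eventually_ge_atTop 1] with m hm
  simpa [Real.norm_eq_abs] using dc_bound ht hm

lemma log_le_two_sqrt {M : ℝ} (hM0 : 0 < M) : Real.log M ≤ 2 * Real.sqrt M := by
  have h := Real.log_le_sub_one_of_pos (Real.sqrt_pos.2 hM0)
  have h2 : Real.log (Real.sqrt M) = Real.log M / 2 := Real.log_sqrt (le_of_lt hM0)
  have h3 : 0 ≤ Real.sqrt M := Real.sqrt_nonneg M
  linarith

lemma log_sq_diff_tendsto {x : ℝ} (hx0 : 0 < x) (hx1 : x < 1) :
    Tendsto (fun N : ℕ => (Real.log ((N:ℝ)+1-x))^2 - (Real.log (N:ℝ))^2) atTop (nhds 0) := by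
  have hg : Tendsto (fun N : ℕ => 8 * ((N:ℝ) ^ (-(1/2):ℝ))) atTop (nhds 0) := by
    have h := (tendsto_rpow_neg_atTop (by norm_num : (0:ℝ) < 1/2)).comp
      tendsto_natCast_atTop_atTop (α := ℕ)
    have h2 := h.const_mul (8:ℝ)
    simpa using h2
  apply squeeze_zero' ?_ ?_ hg
  · filter_upwards [eventually_ge_atTop 1] with N hN
    have h1 : (1:ℝ) ≤ (N:ℝ) := by exact_mod_cast hN
    have hle : Real.log (N:ℝ) ≤ Real.log ((N:ℝ)+1-x) :=
      Real.log_le_log (by linarith) (by linarith)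
    have h0 : 0 ≤ Real.log (N:ℝ) := Real.log_nonneg h1
    nlinarith
  · filter_upwards [eventually_ge_atTop 1] with N hN
    have h1 : (1:ℝ) ≤ (N:ℝ) := by exact_mod_cast hN
    have hN0 : (0:ℝ) < (N:ℝ) := by linarith
    have hB0 : 0 ≤ Real.log (N:ℝ) := Real.log_nonneg h1
    have hle : Real.log (N:ℝ) ≤ Real.log ((N:ℝ)+1-x) :=
      Real.log_le_log (by linarith) (by linarith)
    have hdiff : Real.log ((N:ℝ)+1-x) - Real.log (N:ℝ) ≤ 1 / (N:ℝ) := by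
      rw [← Real.log_div (by linarith) (by linarith)]
      have h2 := Real.log_le_sub_one_of_pos (div_pos (show (0:ℝ) < (N:ℝ)+1-x by linarith) hN0)
      have h3 : ((N:ℝ)+1-x)/(N:ℝ) - 1 ≤ 1/(N:ℝ) := by
        rw [div_sub_one (ne_of_gt hN0), div_le_div_iff₀ hN0 hN0]
        nlinarith
      linarith
    have hA : Real.log ((N:ℝ)+1-x) ≤ 4 * Real.sqrt (N:ℝ) := by
      have h2 := log_le_two_sqrt (show (0:ℝ) < (N:ℝ)+1-x by linarith)
      have h3 : Real.sqrt ((N:ℝ)+1-x) ≤ Real.sqrt (4*(N:ℝ)) :=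
        Real.sqrt_le_sqrt (by linarith)
      have h4 : Real.sqrt (4*(N:ℝ)) = 2 * Real.sqrt (N:ℝ) := by
        rw [show (4:ℝ)*(N:ℝ) = (2*Real.sqrt (N:ℝ))^2 by
          rw [mul_pow, Real.sq_sqrt hN0.le]; ring]
        rw [Real.sqrt_sq (by positivity)]
      rw [h4] at h3
      linarith
    have hsum : Real.log ((N:ℝ)+1-x) + Real.log (N:ℝ) ≤ 8 * Real.sqrt (N:ℝ) := by
      linarith
    have hmul : (Real.log ((N:ℝ)+1-x) + Real.log (N:ℝ)) *
        (Real.log ((N:ℝ)+1-x) - Real.log (N:ℝ)) ≤ (8 * Real.sqrt (N:ℝ)) * (1/(N:ℝ)) := by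
      apply mul_le_mul hsum hdiff (by linarith) (by positivity)
    have hfin : Real.sqrt (N:ℝ) * (1/(N:ℝ)) = (N:ℝ)^(-(1/2):ℝ) := by
      rw [Real.rpow_neg hN0.le, ← Real.sqrt_eq_rpow]
      have hs0 : (0:ℝ) < Real.sqrt (N:ℝ) := Real.sqrt_pos.2 hN0
      field_simp
      exact Real.sq_sqrt hN0.le
    calc (Real.log ((N:ℝ)+1-x))^2 - (Real.log (N:ℝ))^2
        = (Real.log ((N:ℝ)+1-x) + Real.log (N:ℝ)) *
          (Real.log ((N:ℝ)+1-x) - Real.log (N:ℝ)) := by ring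
      _ ≤ (8 * Real.sqrt (N:ℝ)) * (1/(N:ℝ)) := hmul
      _ = 8 * ((N:ℝ) ^ (-(1/2):ℝ)) := by rw [mul_assoc, hfin]

theorem deninger_S_reflection (γ₁ : ℝ)
    (hγ₁ : Filter.Tendsto
      (fun N : ℕ => (∑ j ∈ Finset.Icc 1 N, Real.log j / j) - (Real.log N) ^ 2 / 2)
      Filter.atTop (nhds γ₁))
    (x : ℝ) (hx0 : 0 < x) (hx1 : x < 1) :
    deningerS γ₁ x + deningerS γ₁ (1 - x) =
      (Real.log x) ^ 2 +
        ∑' n : ℕ, ((Real.log ((n + 1) + x)) ^ 2 + (Real.log ((n + 1) - x)) ^ 2 -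
          2 * (Real.log (n + 1)) ^ 2) := by
  have hx1' : |x| ≤ 1 := by rw [abs_of_pos hx0]; linarith
  have h1x : |1 - x| ≤ 1 := by rw [abs_of_pos (by linarith)]; linarith
  have hnx : |(-x)| ≤ 1 := by rw [abs_neg]; exact hx1'
  have Sx : Summable (dcT x) := dc_summable hx1'
  have S1x : Summable (dcT (1-x)) := dc_summable h1x
  have Snx : Summable (dcT (-x)) := dc_summable hnx
  have hd' : ∀ n : ℕ, dcT (1-x) n - dcT (-x) n
      = ((Real.log ((((n+1):ℕ):ℝ)+1-x))^2 - (Real.log ((n:ℝ)+1-x))^2)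
        - 2 * Real.log ((n:ℝ)+1) / ((n:ℝ)+1) := by
    intro n
    unfold dcT
    push_cast
    rw [show (1-x) + ((n:ℝ)+1) = (n:ℝ)+1+1-x by ring,
        show (-x) + ((n:ℝ)+1) = (n:ℝ)+1-x by ring]
    ring
  have hps : ∀ N : ℕ, ∑ n ∈ range N, (dcT (1-x) n - dcT (-x) n)
      = (Real.log ((N:ℝ)+1-x))^2 - (Real.log (1-x))^2
        - 2 * ∑ n ∈ range N, (Real.log ((n:ℝ)+1) / ((n:ℝ)+1)) := by
    intro N
    rw [Finset.sum_congr rfl (fun n _ => hd' n), Finset.sum_sub_distrib,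
      Finset.sum_range_sub (fun k : ℕ => (Real.log ((k:ℝ)+1-x))^2), Finset.mul_sum]
    rw [show ((0:ℕ):ℝ) + 1 - x = 1 - x by push_cast; ring]
    simp only [mul_div_assoc]
  have hIcc : ∀ N : ℕ, (∑ j ∈ Finset.Icc 1 N, Real.log j / j)
      = ∑ n ∈ range N, (Real.log ((n:ℝ)+1) / ((n:ℝ)+1)) := by
    intro N
    rw [show Finset.Icc 1 N = Finset.Ico 1 (N+1) by rw [Finset.Ico_add_one_right_eq_Icc],
      Finset.sum_Ico_eq_sum_range]
    simp only [Nat.add_sub_cancel]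
    apply Finset.sum_congr rfl
    intro i _
    push_cast
    rw [add_comm (1:ℝ) (i:ℝ)]
  have hTend : Tendsto (fun N : ℕ => ∑ n ∈ range N, (dcT (1-x) n - dcT (-x) n)) atTop
      (nhds (0 - 2*γ₁ - (Real.log (1-x))^2)) := by
    have h0 := log_sq_diff_tendsto hx0 hx1
    have h1 := hγ₁.const_mul (2:ℝ)
    have h2 := h0.sub h1
    have heq : ∀ N : ℕ, ((Real.log ((N:ℝ)+1-x))^2 - (Real.log (N:ℝ))^2)
        - 2*((∑ j ∈ Finset.Icc 1 N, Real.log j / j) - (Real.log (N:ℝ))^2/2)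
        = (∑ n ∈ range N, (dcT (1-x) n - dcT (-x) n)) + (Real.log (1-x))^2 := by
      intro N
      rw [hps N, hIcc N]
      ring
    have h3 := (Filter.tendsto_congr heq).1 h2
    have h4 := h3.sub_const ((Real.log (1-x))^2)
    simpa using h4
  have hSumd : Summable (fun n => dcT (1-x) n - dcT (-x) n) := S1x.sub Snx
  have hts : ∑' n, (dcT (1-x) n - dcT (-x) n) = 0 - 2*γ₁ - (Real.log (1-x))^2 :=
    tendsto_nhds_unique hSumd.hasSum.tendsto_sum_nat hTend
  have hkey : (∑' n, dcT (1-x) n) - (∑' n, dcT (-x) n) = - (2*γ₁) - (Real.log (1-x))^2 := by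
    rw [← Summable.tsum_sub S1x Snx, hts]; ring
  have hrhs : (∑' n : ℕ, ((Real.log (((n:ℝ) + 1) + x)) ^ 2 + (Real.log (((n:ℝ) + 1) - x)) ^ 2 -
          2 * (Real.log ((n:ℝ) + 1)) ^ 2))
      = (∑' n, dcT x n) + (∑' n, dcT (-x) n) := by
    rw [← Summable.tsum_add Sx Snx]
    apply tsum_congr
    intro n
    unfold dcT
    rw [show x + ((n:ℝ)+1) = ((n:ℝ)+1)+x by ring,
      show (-x) + ((n:ℝ)+1) = ((n:ℝ)+1)-x by ring]
    ring
  have hS1 : deningerS γ₁ x = 2*γ₁*x + (Real.log x)^2 + ∑' m, dcT x m := rfl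
  have hS2 : deningerS γ₁ (1-x) = 2*γ₁*(1-x) + (Real.log (1-x))^2 + ∑' m, dcT (1-x) m := rfl
  rw [hS1, hS2, hrhs]
  linarith [hkey]
end

section
/- For an odd prime q, Σ_{a=1}^{q-1} T(a/q) = (q/2)(log q)² + γ q log q, where T(x) = −(log x)/x − Σ_{m=1}^{∞}( log(x+m)/(x+m) − (log m)/m ) and γ is the Euler–Mascheroni constant. -/
/-!
Write `f t = log t / t`. Re-indexing the defining series,
`T x = Σ_{m ≥ 0} (f (m + 1) - f (x + m))`. For `x = (a + 1) / q` with `a < q`, the points `x + m`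
with `m < M` are exactly the `n / q` with `1 ≤ n ≤ q M`, and `f (n / q) = q (log n - log q) / n`.
So the `M`-th partial sum of `Σ_a T ((a + 1) / q)` is `q (A M - A (q M)) + q log q · H (q M)`,
where `A N = Σ_{n ≤ N} log n / n` and `H` is the harmonic sequence. Comparison with
`∫ log t / t = (log t)² / 2` shows that `A N - (log N)² / 2` converges (to the Stieltjes constant
`γ₁`), while `H N - log N → γ`; after expanding `log (q M) = log q + log M`, only
`(q / 2) (log q)² + γ q log q` survives in the limit. The term `a = q` is `T 1 = 0`.
-/

open Finset Real

/-- The function `T(x) = -(log x)/x - Σ_{m≥1} (log(x+m)/(x+m) - (log m)/m)`. -/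
noncomputable def TFun (x : ℝ) : ℝ :=
  -(Real.log x / x) -
    ∑' m : ℕ, (Real.log (x + (m + 1)) / (x + (m + 1)) - Real.log (m + 1) / (m + 1))

open Filter Topology

noncomputable def logDiv (t : ℝ) : ℝ := log t / t

lemma logDiv_one : logDiv 1 = 0 := by simp [logDiv]

lemma hasDerivAt_logDiv {t : ℝ} (ht : t ≠ 0) : HasDerivAt logDiv ((1 - log t) / t ^ 2) t := by
  refine ((hasDerivAt_log ht).div (hasDerivAt_id t) ht).congr_deriv ?_
  simp [ht]

lemma abs_one_sub_log_le {t : ℝ} (ht : 1 ≤ t) : |1 - log t| ≤ 3 * t ^ (1 / 2 : ℝ) := by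
  have hlog : log t ≤ 2 * t ^ (1 / 2 : ℝ) := by
    linarith [log_le_rpow_div (zero_le_one.trans ht) (by norm_num : (0 : ℝ) < 1 / 2)]
  have hsqrt : 1 ≤ t ^ (1 / 2 : ℝ) := one_le_rpow ht (by norm_num)
  rw [abs_le]
  constructor <;> linarith [log_nonneg ht]

lemma abs_one_sub_log_div_sq_le {t : ℝ} (ht : 1 ≤ t) :
    |(1 - log t) / t ^ 2| ≤ 3 * t ^ (-3 / 2 : ℝ) := by
  have ht0 : 0 < t := zero_lt_one.trans_le ht
  have hpow : t ^ (-3 / 2 : ℝ) = t ^ (1 / 2 : ℝ) / t ^ 2 := by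
    rw [← rpow_natCast, ← rpow_sub ht0]
    norm_num
  rw [abs_div, abs_of_pos (by positivity : 0 < t ^ 2), hpow, mul_div_assoc']
  gcongr
  exact abs_one_sub_log_le ht

lemma abs_logDiv_add_sub_le {a x : ℝ} (ha : 1 ≤ a) (hx : 0 ≤ x) :
    |logDiv (a + x) - logDiv a| ≤ 3 * a ^ (-3 / 2 : ℝ) * x := by
  have hderiv : ∀ t ∈ Set.Icc a (a + x),
      HasDerivWithinAt logDiv ((1 - log t) / t ^ 2) (Set.Icc a (a + x)) t := fun t ht =>
    (hasDerivAt_logDiv (by linarith [ht.1])).hasDerivWithinAt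
  have hbound : ∀ t ∈ Set.Ico a (a + x), ‖(1 - log t) / t ^ 2‖ ≤ 3 * a ^ (-3 / 2 : ℝ) :=
    fun t ht => (abs_one_sub_log_div_sq_le (ha.trans ht.1)).trans <| by
      gcongr 3 * ?_
      exact rpow_le_rpow_of_nonpos (by linarith) ht.1 (by norm_num)
  simpa using
    norm_image_sub_le_of_norm_deriv_le_segment' hderiv hbound (a + x) ⟨by linarith, le_rfl⟩

lemma antitoneOn_logDiv : AntitoneOn logDiv (Set.Ici (exp 1)) := by
  have hpos : ∀ t ∈ Set.Ici (exp 1), 0 < t := fun t ht => (exp_pos 1).trans_le ht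
  refine antitoneOn_of_deriv_nonpos (convex_Ici _) ?_ ?_ fun t ht => ?_
  · exact fun t ht => (hasDerivAt_logDiv (hpos t ht).ne').continuousAt.continuousWithinAt
  · exact fun t ht => (hasDerivAt_logDiv (hpos t (interior_subset ht)).ne').differentiableAt
      |>.differentiableWithinAt
  · rw [interior_Ici] at ht
    have ht0 := hpos t (Set.Ioi_subset_Ici_self ht)
    rw [(hasDerivAt_logDiv ht0.ne').deriv]
    have : 1 ≤ log t := by rw [le_log_iff_exp_le ht0]; exact ht.le
    exact div_nonpos_of_nonpos_of_nonneg (by linarith) (by positivity)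

lemma integral_logDiv {a b : ℝ} (ha : 0 < a) (hb : 0 < b) :
    ∫ t in a..b, logDiv t = log b ^ 2 / 2 - log a ^ 2 / 2 := by
  have hpos : ∀ t ∈ Set.uIcc a b, 0 < t := fun t ht =>
    (lt_min ha hb).trans_le (Set.mem_uIcc.mp ht |>.elim (fun h => min_le_left a b |>.trans h.1)
      fun h => min_le_right a b |>.trans h.1)
  refine intervalIntegral.integral_eq_sub_of_hasDerivAt (f := fun t => log t ^ 2 / 2)
    (fun t ht => ?_) ?_
  · refine (((hasDerivAt_log (hpos t ht).ne').pow 2).div_const 2).congr_deriv ?_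
    simp only [logDiv]
    ring
  · exact ContinuousOn.intervalIntegrable fun t ht =>
      (hasDerivAt_logDiv (hpos t ht).ne').continuousAt.continuousWithinAt

lemma tendsto_logDiv_atTop : Tendsto logDiv atTop (𝓝 0) :=
  isLittleO_log_id_atTop.tendsto_div_nhds_zero

lemma logDiv_div {t c : ℝ} (ht : t ≠ 0) (hc : c ≠ 0) :
    logDiv (t / c) = c * logDiv t - c * log c / t := by
  simp only [logDiv]
  rw [log_div ht hc]
  field_simp

lemma summable_logDiv_add_sub {x : ℝ} (hx : 0 ≤ x) :
    Summable fun m : ℕ => logDiv (x + (m + 1)) - logDiv (m + 1) := by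
  have hmajor : Summable fun m : ℕ => 3 * ((m : ℝ) + 1) ^ (-3 / 2 : ℝ) * x := by
    refine (Summable.mul_left 3 ?_).mul_right x
    simpa using
      (summable_nat_add_iff 1).mpr (summable_nat_rpow.mpr (by norm_num : (-3 / 2 : ℝ) < -1))
  refine Summable.of_norm_bounded hmajor fun m => ?_
  rw [add_comm x]
  exact abs_logDiv_add_sub_le (by linarith [m.cast_nonneg (α := ℝ)]) hx

lemma hasSum_logDiv_succ_sub : HasSum (fun m : ℕ => logDiv (1 + (m + 1)) - logDiv (m + 1)) 0 := by
  rw [(summable_logDiv_add_sub zero_le_one).hasSum_iff_tendsto_nat]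
  have hpartial (N : ℕ) :
      ∑ m ∈ range N, (logDiv (1 + (m + 1)) - logDiv (m + 1)) = logDiv (N + 1) := by
    simpa [add_comm (1 : ℝ), logDiv_one] using sum_range_sub (fun m : ℕ => logDiv (m + 1)) N
  simp only [hpartial]
  exact tendsto_logDiv_atTop.comp (tendsto_atTop_add_const_right _ 1 tendsto_natCast_atTop_atTop)

lemma hasSum_TFun {x : ℝ} (hx : 0 ≤ x) :
    HasSum (fun m : ℕ => logDiv (m + 1) - logDiv (x + m)) (TFun x) := by
  -- after a shift of the index, `-logDiv x` is the `m = 0` term, and the null telescoping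
  -- series `hasSum_logDiv_succ_sub` supplies the `logDiv (m + 1)`
  have hshift := hasSum_logDiv_succ_sub.sub (summable_logDiv_add_sub hx).hasSum
  have hsum := (hasSum_nat_add_iff (f := fun m : ℕ => logDiv (m + 1) - logDiv (x + m)) 1).mp
    (by convert hshift using 2 with m; push_cast; ring_nf)
  convert hsum using 1
  · rfl
  · simp only [TFun, sum_range_one, Nat.cast_zero, zero_add, add_zero, logDiv_one]
    simp only [logDiv]
    ring

lemma TFun_one : TFun 1 = 0 := by
  have h := hasSum_TFun zero_le_one
  have hzero : (fun m : ℕ => logDiv (m + 1) - logDiv (1 + m)) = 0 := by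
    ext m
    rw [Pi.zero_apply, add_comm 1 (m : ℝ), sub_self]
  rw [hzero] at h
  exact h.unique hasSum_zero

/-- The `N`-th approximant of the first Stieltjes constant `γ₁`. -/
noncomputable def stieltjesOneSeq (N : ℕ) : ℝ :=
  ∑ n ∈ range N, logDiv (n + 1) - log N ^ 2 / 2

lemma abs_stieltjesOneSeq_sub_le {M N : ℕ} (hM : 3 ≤ M) (hMN : M ≤ N) :
    |stieltjesOneSeq N - stieltjesOneSeq M| ≤ logDiv M := by
  have hM₀ : (0 : ℝ) < M := by positivity
  have hMN' : (M : ℝ) ≤ N := by exact_mod_cast hMN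
  have hexp : exp 1 ≤ M := by
    have : (3 : ℝ) ≤ M := by exact_mod_cast hM
    linarith [exp_one_lt_d9]
  have hanti : AntitoneOn logDiv (Set.Icc (M : ℝ) N) :=
    antitoneOn_logDiv.mono fun t ht => hexp.trans ht.1
  have hint := integral_logDiv hM₀ (hM₀.trans_le hMN')
  have hupper := hanti.sum_le_integral_Ico hMN
  have hlower := hanti.integral_le_sum_Ico hMN
  have hshift : ∑ n ∈ Ico M N, logDiv ↑(n + 1) =
      ∑ n ∈ range N, logDiv (n + 1) - ∑ n ∈ range M, logDiv (n + 1) := by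
    rw [sum_Ico_eq_sub _ hMN]
    push_cast
    rfl
  have htele : ∑ n ∈ Ico M N, (logDiv ↑(n + 1) - logDiv n) = logDiv N - logDiv M :=
    sum_Ico_sub (fun n : ℕ => logDiv n) hMN
  have hN : 0 ≤ logDiv N := div_nonneg (log_nonneg (by exact_mod_cast (by omega : 1 ≤ N)))
    (by positivity)
  rw [sum_sub_distrib] at htele
  unfold stieltjesOneSeq
  rw [abs_le]
  constructor <;> linarith

lemma cauchySeq_stieltjesOneSeq : CauchySeq stieltjesOneSeq := by
  rw [Metric.cauchySeq_iff']
  intro ε hε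
  obtain ⟨M, hM⟩ := (((tendsto_logDiv_atTop.comp tendsto_natCast_atTop_atTop).eventually
    (gt_mem_nhds hε)).and (eventually_ge_atTop 3)).exists_forall_of_atTop
  obtain ⟨hsmall, h3⟩ := hM M le_rfl
  exact ⟨M, fun N hN => (abs_stieltjesOneSeq_sub_le h3 hN).trans_lt hsmall⟩

lemma sum_range_mul_eq_sum_sum {M : Type*} [AddCommMonoid M] (g : ℕ → M) (q N : ℕ) :
    ∑ n ∈ range (q * N), g n = ∑ m ∈ range N, ∑ a ∈ range q, g (q * m + a) := by
  induction N with
  | zero => simp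
  | succ N ih => rw [mul_add_one, sum_range_add, ih, sum_range_succ]

lemma sum_range_logDiv_succ_div {c : ℝ} (hc : c ≠ 0) (N : ℕ) :
    ∑ n ∈ range N, logDiv ((n + 1) / c) =
      c * ∑ n ∈ range N, logDiv (n + 1) - c * log c * harmonic N := by
  simp only [harmonic, Rat.cast_sum, mul_sum, ← sum_sub_distrib]
  refine sum_congr rfl fun n _ => ?_
  rw [logDiv_div (by positivity) hc]
  push_cast
  ring

lemma sum_range_sum_range_logDiv_sub {q M : ℕ} (hq : q ≠ 0) (hM : M ≠ 0) :
    ∑ m ∈ range M, ∑ a ∈ range q, (logDiv (m + 1) - logDiv ((a + 1) / q + m)) =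
      q * (stieltjesOneSeq M - stieltjesOneSeq (q * M)) +
        q * log q * (harmonic (q * M) - log ↑(q * M)) + q / 2 * log q ^ 2 := by
  have hq' : (q : ℝ) ≠ 0 := by exact_mod_cast hq
  have hregroup : ∑ m ∈ range M, ∑ a ∈ range q, logDiv ((a + 1) / q + m) =
      ∑ n ∈ range (q * M), logDiv ((n + 1) / q) := by
    rw [sum_range_mul_eq_sum_sum]
    refine sum_congr rfl fun m _ => sum_congr rfl fun a _ => ?_
    push_cast
    congr 1
    field_simp
    ring
  simp only [sum_sub_distrib, sum_const, card_range, nsmul_eq_mul, hregroup,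
    sum_range_logDiv_succ_div hq', stieltjesOneSeq]
  rw [← mul_sum, Nat.cast_mul, log_mul hq' (by exact_mod_cast hM)]
  ring

lemma sum_Icc_TFun_div {q : ℕ} (hq : q ≠ 0) :
    ∑ a ∈ Icc 1 (q - 1), TFun (a / q) = ∑ a ∈ range q, TFun ((a + 1) / q) := by
  obtain ⟨p, rfl⟩ : ∃ p, q = p + 1 := ⟨q - 1, by omega⟩
  rw [Nat.add_sub_cancel, ← Ico_add_one_right_eq_Icc, sum_Ico_eq_sum_range, Nat.add_sub_cancel,
    sum_range_succ]
  push_cast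
  rw [div_self (by positivity), TFun_one, add_zero]
  simp only [add_comm]

theorem sum_range_TFun_succ_div {q : ℕ} (hq : q ≠ 0) :
    ∑ a ∈ range q, TFun ((a + 1) / q) =
      q / 2 * log q ^ 2 + eulerMascheroniConstant * q * log q := by
  obtain ⟨c, hc⟩ := cauchySeq_tendsto_of_complete cauchySeq_stieltjesOneSeq
  have hqM : Tendsto (fun M : ℕ => q * M) atTop atTop := tendsto_id.const_mul_atTop' (by omega)
  have hpartial := (hasSum_sum (s := range q) fun a _ => hasSum_TFun (x := ((a : ℝ) + 1) / q)
    (by positivity)).tendsto_sum_nat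
  have hlim := (((hc.sub (hc.comp hqM)).const_mul (q : ℝ)).add
    ((tendsto_harmonic_sub_log.comp hqM).const_mul (q * log q))).add_const (q / 2 * log q ^ 2)
  rw [tendsto_nhds_unique hpartial (hlim.congr' ?_)]
  · ring
  · filter_upwards [eventually_ne_atTop 0] with M hM
    rw [sum_range_sum_range_logDiv_sub hq hM]
    rfl

theorem sum_T_eq_general (q : ℕ) (hq : q.Prime) :
    ∑ a ∈ Finset.Icc 1 (q - 1), TFun ((a : ℝ) / q) =
      (q : ℝ) / 2 * (Real.log q) ^ 2 + Real.eulerMascheroniConstant * q * Real.log q := by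
  rw [sum_Icc_TFun_div hq.ne_zero, sum_range_TFun_succ_div hq.ne_zero]

theorem sum_T_eq (q : ℕ) (hq : q.Prime) (hodd : Odd q) :
    ∑ a ∈ Finset.Icc 1 (q - 1), TFun ((a : ℝ) / q) =
      (q : ℝ) / 2 * (Real.log q) ^ 2 + Real.eulerMascheroniConstant * q * Real.log q :=
  sum_T_eq_general q hq
end

section
/- For an odd prime q, Σ_{a=1}^{q-1} S(a/q) = −ζ''(0)(q−1) − (log q)·log(2π) − (log q)²/2, where S(x) = 2γ₁x + (log x)² + Σ_{m=1}^{∞}((log(x+m))² − (log m)² − 2x(log m)/m) and ζ''(0) is the second derivative of the Riemann zeta function at 0. -/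
/-!
Truncate the series in `S(a/q)` after `N` terms and sum over `1 ≤ a < q`: the points
`a/q + m` together with the integers `1, …, N + 1` run exactly once through `n/q`,
`1 ≤ n ≤ (N + 1) q`. So the truncated sum is an explicit combination of `∑ log² n`, `log n!`
and `∑ log n / n`, taken up to `(N + 1) q` and `N + 1`, and the terms `2 γ₁ a/q` cancel against
the definition of `γ₁`. Stirling's formula gives
`log n! = n log n - n + ½ log n + ½ log 2π + o(1)`, and the Euler–Maclaurin formula gives
`∑_{n ≤ N} log² n = N log² N - 2 N log N + 2 N + ½ log² N + ζ''(0) + o(1)`: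
the functions `∑_{n ≤ N} n^{-s} - N^{1-s}/(1-s) - N^{-s}/2` differ from `ζ(s)` by a tail of
trapezoid-rule errors of size `O(|s (s + 1)| n^{-Re s - 2})`, so they converge to `ζ` locally
uniformly on `Re s > -1/4`, and hence so do their second derivatives at `0`. Substituting these
expansions, all growing terms cancel.
-/

open Finset Real Filter

namespace Deninger

open scoped Topology ComplexOrder

noncomputable def sumLogSq (N : ℕ) : ℝ := ∑ n ∈ range N, log (n + 1) ^ 2

noncomputable def sumLogSqRemainder (N : ℕ) : ℝ :=
  sumLogSq N - (N * log N ^ 2 - 2 * N * log N + 2 * N + log N ^ 2 / 2)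

noncomputable def sumLogDiv (N : ℕ) : ℝ := ∑ n ∈ range N, log (n + 1) / (n + 1)

theorem sum_Icc_one_eq_sum_range {M : Type*} [AddCommMonoid M] (f : ℕ → M) (n : ℕ) :
    ∑ a ∈ Icc 1 n, f a = ∑ a ∈ range n, f (a + 1) := by
  rw [← Finset.Ico_add_one_right_eq_Icc, Finset.sum_Ico_eq_sum_range]
  simp [add_comm]

theorem sum_range_log_succ (N : ℕ) : ∑ n ∈ range N, log (n + 1) = log N.factorial := by
  rw [← Finset.prod_range_add_one_eq_factorial, Nat.cast_prod,
    Real.log_prod fun n _ => by positivity]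
  push_cast
  rfl

theorem tendsto_log_factorial_sub :
    Tendsto (fun N : ℕ => log N.factorial - (N * log N - N + log N / 2)) atTop
      (𝓝 (log (2 * π) / 2)) := by
  have hlim := (Stirling.tendsto_stirlingSeq_sqrt_pi.log (Real.sqrt_pos.2 pi_pos).ne').add_const
    (log 2 / 2)
  rw [log_sqrt pi_pos.le] at hlim
  rw [log_mul two_ne_zero pi_pos.ne', add_div, add_comm (log 2 / 2)]
  refine hlim.congr' ((eventually_gt_atTop 0).mono fun N hN => ?_)
  have hN' : (N : ℝ) ≠ 0 := by positivity
  rw [Stirling.log_stirlingSeq_formula, log_mul two_ne_zero hN', log_div hN' (exp_pos 1).ne',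
    log_exp]
  ring

/-! ### Euler–Maclaurin approximation of `ζ` near `0` -/

theorem integral_peanoKernel_mul_eq_trapezoidal_error {a b : ℝ} {g g' g'' : ℝ → ℂ}
    (hg : ∀ t ∈ Set.uIcc a b, HasDerivAt g (g' t) t)
    (hg' : ∀ t ∈ Set.uIcc a b, HasDerivAt g' (g'' t) t)
    (hg'' : IntervalIntegrable g'' MeasureTheory.volume a b) :
    ∫ t in a..b, (((t - a) * (b - t) / 2 : ℝ) : ℂ) * g'' t =
      ((b - a : ℝ) : ℂ) * (g a + g b) / 2 - ∫ t in a..b, g t := by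
  have hφ : ∀ t, HasDerivAt (fun t : ℝ => (((t - a) * (b - t) / 2 : ℝ) : ℂ))
      (((a + b) / 2 - t : ℝ) : ℂ) t := fun t => by
    have := (((hasDerivAt_id t).sub_const a).mul ((hasDerivAt_id t).const_sub b)).div_const 2
    exact (this.congr_deriv (by simp only [id_eq]; ring)).ofReal_comp
  have hψ : ∀ t,
      HasDerivAt (fun t : ℝ => (((a + b) / 2 - t : ℝ) : ℂ)) ((-1 : ℝ) : ℂ) t := fun t =>
    ((hasDerivAt_id t).const_sub _).ofReal_comp
  have hψ_int : IntervalIntegrable (fun t : ℝ => (((a + b) / 2 - t : ℝ) : ℂ))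
      MeasureTheory.volume a b :=
    (by fun_prop : Continuous fun t : ℝ => (((a + b) / 2 - t : ℝ) : ℂ)).intervalIntegrable a b
  have hg'_int : IntervalIntegrable g' MeasureTheory.volume a b :=
    ContinuousOn.intervalIntegrable fun t ht => (hg' t ht).continuousAt.continuousWithinAt
  rw [intervalIntegral.integral_mul_deriv_eq_deriv_mul (fun t _ => hφ t) hg' hψ_int hg'',
    intervalIntegral.integral_mul_deriv_eq_deriv_mul (fun t _ => hψ t) hg
      intervalIntegrable_const hg'_int, intervalIntegral.integral_const_mul]
  push_cast
  ring

/-- The partial sum of `ζ(s)` corrected by the first two Euler–Maclaurin terms. -/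
noncomputable def zetaApprox (N : ℕ) (s : ℂ) : ℂ :=
  ∑ n ∈ range N, ((n : ℂ) + 1) ^ (-s) - (N : ℂ) ^ (1 - s) * (1 - s)⁻¹ -
    (N : ℂ) ^ (-s) / 2

theorem hasDerivAt_ofReal_cpow_const_of_pos {t : ℝ} (ht : 0 < t) (w : ℂ) :
    HasDerivAt (fun y : ℝ => (y : ℂ) ^ w) (w * (t : ℂ) ^ (w - 1)) t :=
  (Complex.hasStrictDerivAt_cpow_const (Complex.ofReal_mem_slitPlane.2 ht)).hasDerivAt.comp_ofReal

theorem zetaApprox_succ_sub {n : ℕ} (hn : 1 ≤ n) {s : ℂ} (hs : s ≠ 1) :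
    zetaApprox (n + 1) s - zetaApprox n s = ∫ t in (n : ℝ)..(n + 1 : ℝ),
      (((t - n) * (n + 1 - t) / 2 : ℝ) : ℂ) * (s * (s + 1) * (t : ℂ) ^ (-s - 2)) := by
  have hn0 : (0 : ℝ) < n := by exact_mod_cast hn
  have hpos : ∀ t ∈ Set.uIcc (n : ℝ) (n + 1), 0 < t := fun t ht => by
    rw [Set.uIcc_of_le (by linarith)] at ht
    linarith [ht.1]
  have hg : ∀ t ∈ Set.uIcc (n : ℝ) (n + 1),
      HasDerivAt (fun y : ℝ => (y : ℂ) ^ (-s)) (-s * (t : ℂ) ^ (-s - 1)) t :=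
    fun t ht => hasDerivAt_ofReal_cpow_const_of_pos (hpos t ht) (-s)
  have hg' : ∀ t ∈ Set.uIcc (n : ℝ) (n + 1),
      HasDerivAt (fun y : ℝ => -s * (y : ℂ) ^ (-s - 1))
        (s * (s + 1) * (t : ℂ) ^ (-s - 2)) t := fun t ht =>
    ((hasDerivAt_ofReal_cpow_const_of_pos (hpos t ht) (-s - 1)).const_mul (-s)).congr_deriv
      (by rw [show -s - 1 - 1 = -s - 2 by ring]; ring)
  have hg''_cont : ContinuousOn (fun t : ℝ => s * (s + 1) * (t : ℂ) ^ (-s - 2))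
      (Set.uIcc (n : ℝ) (n + 1)) := fun t ht =>
    ((hasDerivAt_ofReal_cpow_const_of_pos (hpos t ht) (-s - 2)).continuousAt.const_mul
      _).continuousWithinAt
  have hint : ∫ t in (n : ℝ)..(n + 1 : ℝ), (t : ℂ) ^ (-s) =
      (((n + 1 : ℝ) : ℂ) ^ (1 - s) - ((n : ℝ) : ℂ) ^ (1 - s)) / (1 - s) := by
    rw [integral_cpow (Or.inr ⟨fun h => hs (by linear_combination -h),
      fun h => (hpos 0 h).false⟩), neg_add_eq_sub]
  rw [integral_peanoKernel_mul_eq_trapezoidal_error hg hg' hg''_cont.intervalIntegrable, hint]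
  have h1s : (1 : ℂ) - s ≠ 0 := sub_ne_zero.2 (Ne.symm hs)
  simp only [zetaApprox, sum_range_succ]
  push_cast
  field_simp
  ring

theorem norm_zetaApprox_succ_sub_le {n : ℕ} (hn : 1 ≤ n) {s : ℂ} (hs : s ≠ 1) {σ : ℝ}
    (hσ : σ ≤ s.re) (hσ2 : -2 ≤ σ) :
    ‖zetaApprox (n + 1) s - zetaApprox n s‖ ≤ ‖s * (s + 1)‖ * (n : ℝ) ^ (-σ - 2) := by
  have hn0 : (0 : ℝ) < n := by exact_mod_cast hn
  rw [zetaApprox_succ_sub hn hs]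
  have hbound : ∀ t ∈ Set.uIoc (n : ℝ) (n + 1),
      ‖(((t - n) * (n + 1 - t) / 2 : ℝ) : ℂ) * (s * (s + 1) * (t : ℂ) ^ (-s - 2))‖ ≤
        ‖s * (s + 1)‖ * (n : ℝ) ^ (-σ - 2) := fun t ht => by
    rw [Set.uIoc_of_le (by linarith)] at ht
    obtain ⟨ht1, ht2⟩ := ht
    have hweight : ‖(((t - n) * (n + 1 - t) / 2 : ℝ) : ℂ)‖ ≤ 1 := by
      rw [Complex.norm_real, Real.norm_eq_abs, abs_le]
      constructor <;> nlinarith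
    have hpow : ‖(t : ℂ) ^ (-s - 2)‖ ≤ (n : ℝ) ^ (-σ - 2) := by
      rw [Complex.norm_cpow_eq_rpow_re_of_pos (hn0.trans ht1)]
      calc t ^ (-s - 2).re ≤ (n : ℝ) ^ (-s - 2).re :=
            Real.rpow_le_rpow_of_nonpos hn0 ht1.le
              (by simp only [Complex.sub_re, Complex.neg_re, Complex.re_ofNat]; linarith)
        _ ≤ (n : ℝ) ^ (-σ - 2) :=
            Real.rpow_le_rpow_of_exponent_le (by exact_mod_cast hn)
              (by simp only [Complex.sub_re, Complex.neg_re, Complex.re_ofNat]; linarith)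
    rw [norm_mul, norm_mul]
    calc _ ≤ 1 * (‖s * (s + 1)‖ * (n : ℝ) ^ (-σ - 2)) := by gcongr
      _ = _ := one_mul _
  simpa using intervalIntegral.norm_integral_le_of_norm_le_const hbound

/-- Slit along `[1, ∞)` (`Set.Ici 1` for the partial order on `ℂ`) so as to be star-shaped
about `0`. -/
def zetaDomain : Set ℂ := {s | -1 / 4 < s.re} \ Set.Ici 1

theorem isOpen_zetaDomain : IsOpen zetaDomain :=
  (isOpen_lt continuous_const Complex.continuous_re).sdiff isClosed_Ici

theorem zero_mem_zetaDomain : (0 : ℂ) ∈ zetaDomain :=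
  ⟨by norm_num, by simp [Complex.le_def]⟩

theorem ne_one_of_mem_zetaDomain {s : ℂ} (hs : s ∈ zetaDomain) : s ≠ 1 :=
  fun h => hs.2 h.symm.le

theorem isPreconnected_zetaDomain : IsPreconnected zetaDomain := by
  have hstar : StarConvex ℝ 0 zetaDomain :=
    ((convex_halfSpace_re_gt _).starConvex zero_mem_zetaDomain.1).inter
      (starConvex_compl_Ici zero_lt_one)
  exact (hstar.isPathConnected zero_mem_zetaDomain).isConnected.isPreconnected

theorem tendstoLocallyUniformlyOn_zetaApprox :
    TendstoLocallyUniformlyOn (fun N => zetaApprox (N + 1))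
      (fun s => zetaApprox 1 s + ∑' n : ℕ, (zetaApprox (n + 2) s - zetaApprox (n + 1) s))
      atTop zetaDomain := by
  rw [tendstoLocallyUniformlyOn_iff_forall_isCompact isOpen_zetaDomain]
  intro K hK hKc
  obtain ⟨C, hC⟩ := hKc.exists_bound_of_continuousOn
    (f := fun s : ℂ => s * (s + 1)) (by fun_prop)
  have hbound : ∀ n : ℕ, ∀ s ∈ K, ‖zetaApprox (n + 2) s - zetaApprox (n + 1) s‖ ≤
      C * ((n + 1 : ℕ) : ℝ) ^ (-(7 / 4) : ℝ) := fun n s hs => by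
    have hs' := hK hs
    have hexp : -(-1 / 4 : ℝ) - 2 = -(7 / 4) := by norm_num
    refine (norm_zetaApprox_succ_sub_le (by omega) (ne_one_of_mem_zetaDomain hs') hs'.1.le
      (by norm_num)).trans ?_
    rw [hexp]
    exact mul_le_mul_of_nonneg_right (hC s hs) (by positivity)
  have hsum : Summable fun n : ℕ => C * ((n + 1 : ℕ) : ℝ) ^ (-(7 / 4) : ℝ) :=
    ((summable_nat_add_iff 1).2 (Real.summable_nat_rpow.2 (by norm_num))).mul_left C
  have hconst : TendstoUniformlyOn (fun _ : ℕ => zetaApprox 1) (zetaApprox 1) atTop K :=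
    fun _ hu => Eventually.of_forall fun _ _ _ => refl_mem_uniformity hu
  refine (hconst.add (tendstoUniformlyOn_tsum_nat hsum hbound)).congr
    (Eventually.of_forall fun N s _ => ?_)
  have htelescope := sum_range_sub (fun n => zetaApprox (n + 1) s) N
  simp only [Pi.add_apply] at htelescope ⊢
  rw [htelescope]
  ring

theorem tendsto_zetaApprox_riemannZeta {s : ℂ} (hs : 1 < s.re) :
    Tendsto (fun N => zetaApprox N s) atTop (𝓝 (riemannZeta s)) := by
  have hsum : HasSum (fun n : ℕ => ((n : ℂ) + 1) ^ (-s)) (riemannZeta s) := by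
    have := ((summable_nat_add_iff 1).2 (Complex.summable_one_div_nat_cpow.2 hs)).hasSum
    rw [zeta_eq_tsum_one_div_nat_add_one_cpow hs]
    simpa [Complex.cpow_neg] using this
  have hcpow : ∀ {w : ℂ}, w.re < 0 → Tendsto (fun N : ℕ => (N : ℂ) ^ w) atTop (𝓝 0) :=
    fun {w} hw => squeeze_zero_norm' ((eventually_gt_atTop 0).mono fun N hN =>
      (Complex.norm_natCast_cpow_of_pos hN w).le)
      (by simpa [Function.comp_def] using
        (tendsto_rpow_neg_atTop (neg_pos.2 hw)).comp tendsto_natCast_atTop_atTop)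
  have h1 := (hcpow (w := 1 - s)
    (by simp only [Complex.sub_re, Complex.one_re]; linarith)).mul_const (1 - s)⁻¹
  have h2 := (hcpow (w := -s) (by simp only [Complex.neg_re]; linarith)).div_const 2
  simpa [zetaApprox] using (hsum.tendsto_sum_nat.sub h1).sub h2

theorem hasDerivAt_cpow_neg {c : ℂ} (hc : c ≠ 0) (s : ℂ) :
    HasDerivAt (fun s : ℂ => c ^ (-s)) (-Complex.log c * c ^ (-s)) s :=
  (((Complex.hasStrictDerivAt_const_cpow (Or.inl hc)).hasDerivAt).comp s
    (hasDerivAt_neg s)).congr_deriv (by ring)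

theorem hasDerivAt_cpow_one_sub_mul_inv_pow {c : ℂ} (hc : c ≠ 0) (k : ℕ) {s : ℂ}
    (hs : s ≠ 1) :
    HasDerivAt (fun s : ℂ => c ^ (1 - s) * (1 - s)⁻¹ ^ k)
      (-Complex.log c * (c ^ (1 - s) * (1 - s)⁻¹ ^ k) +
        k * (c ^ (1 - s) * (1 - s)⁻¹ ^ (k + 1))) s := by
  have h1s : (1 : ℂ) - s ≠ 0 := sub_ne_zero.2 (Ne.symm hs)
  have hcpow : HasDerivAt (fun s : ℂ => c ^ (1 - s)) (-Complex.log c * c ^ (1 - s)) s :=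
    (((Complex.hasStrictDerivAt_const_cpow (Or.inl hc)).hasDerivAt).comp s
      ((hasDerivAt_id s).const_sub 1)).congr_deriv (by simp only [id]; ring)
  have hinv : HasDerivAt (fun s : ℂ => (1 - s)⁻¹) ((1 - s)⁻¹ ^ 2) s :=
    (((hasDerivAt_id s).const_sub 1).fun_inv h1s).congr_deriv (by simp [inv_pow])
  have hpow : HasDerivAt (fun s : ℂ => (1 - s)⁻¹ ^ k) (k * (1 - s)⁻¹ ^ (k + 1)) s := by
    refine (hinv.fun_pow k).congr_deriv ?_
    rcases k with _ | k
    · simp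
    · rw [Nat.add_sub_cancel]
      push_cast
      ring
  exact (hcpow.mul hpow).congr_deriv (by ring)

noncomputable def zetaApproxDeriv (N : ℕ) (s : ℂ) : ℂ :=
  ∑ n ∈ range N, -Complex.log (n + 1) * ((n : ℂ) + 1) ^ (-s) +
    Complex.log N * ((N : ℂ) ^ (1 - s) * (1 - s)⁻¹) - (N : ℂ) ^ (1 - s) * (1 - s)⁻¹ ^ 2 +
    Complex.log N * (N : ℂ) ^ (-s) / 2

theorem hasDerivAt_zetaApprox {N : ℕ} (hN : N ≠ 0) {s : ℂ} (hs : s ≠ 1) :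
    HasDerivAt (zetaApprox N) (zetaApproxDeriv N s) s := by
  have hN' : (N : ℂ) ≠ 0 := Nat.cast_ne_zero.2 hN
  have := ((HasDerivAt.fun_sum (u := range N) fun n _ => hasDerivAt_cpow_neg
    (Nat.cast_add_one_ne_zero n) s).sub (hasDerivAt_cpow_one_sub_mul_inv_pow hN' 1 hs)).sub
      ((hasDerivAt_cpow_neg hN' s).div_const 2)
  refine (this.congr_deriv ?_).congr_of_eventuallyEq
    (Eventually.of_forall fun s => by simp [zetaApprox])
  simp only [zetaApproxDeriv]
  push_cast
  ring

theorem deriv_deriv_zetaApprox_zero {N : ℕ} (hN : N ≠ 0) :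
    deriv (deriv (zetaApprox N)) 0 = sumLogSqRemainder N := by
  have hN' : (N : ℂ) ≠ 0 := Nat.cast_ne_zero.2 hN
  have h01 : (0 : ℂ) ≠ 1 := zero_ne_one
  have heq : deriv (zetaApprox N) =ᶠ[𝓝 0] zetaApproxDeriv N :=
    (eventually_ne_nhds h01).mono fun s hs => (hasDerivAt_zetaApprox hN hs).deriv
  have hderiv := ((((HasDerivAt.fun_sum (u := range N) fun n _ =>
    (hasDerivAt_cpow_neg (Nat.cast_add_one_ne_zero n) 0).const_mul
      (-Complex.log (n + 1))).add
    ((hasDerivAt_cpow_one_sub_mul_inv_pow hN' 1 h01).const_mul (Complex.log N))).sub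
    (hasDerivAt_cpow_one_sub_mul_inv_pow hN' 2 h01)).add
    (((hasDerivAt_cpow_neg hN' 0).const_mul (Complex.log N)).div_const 2)).congr_of_eventuallyEq
    (Eventually.of_forall fun s => by simp [zetaApproxDeriv] : zetaApproxDeriv N =ᶠ[𝓝 0] _)
  have hlog : ∀ n : ℕ, Complex.log ((n : ℂ) + 1) = (log (n + 1) : ℝ) := fun n => by
    rw [Complex.ofReal_log (by positivity)]
    push_cast
    rfl
  rw [heq.deriv_eq, hderiv.deriv]
  simp only [neg_zero, Complex.cpow_zero, sub_zero, Complex.cpow_one, inv_one, one_pow,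
    mul_one, hlog, sumLogSqRemainder, sumLogSq]
  push_cast
  simp only [← sq, neg_sq]
  ring

theorem differentiableOn_zetaApprox (N : ℕ) :
    DifferentiableOn ℂ (zetaApprox (N + 1)) zetaDomain := fun _ hs =>
  (hasDerivAt_zetaApprox N.succ_ne_zero
    (ne_one_of_mem_zetaDomain hs)).differentiableAt.differentiableWithinAt

theorem tendstoLocallyUniformlyOn_zetaApprox_riemannZeta :
    TendstoLocallyUniformlyOn (fun N => zetaApprox (N + 1)) riemannZeta atTop zetaDomain := by
  have hlim := tendstoLocallyUniformlyOn_zetaApprox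
  have hlim_an := (hlim.differentiableOn (Eventually.of_forall differentiableOn_zetaApprox)
    isOpen_zetaDomain).analyticOnNhd isOpen_zetaDomain
  have hζ_an : AnalyticOnNhd ℂ riemannZeta zetaDomain := DifferentiableOn.analyticOnNhd
    (fun s hs => (differentiableAt_riemannZeta
      (ne_one_of_mem_zetaDomain hs)).differentiableWithinAt) isOpen_zetaDomain
  have hV : IsOpen ({s : ℂ | 1 < s.re} ∩ zetaDomain) :=
    (isOpen_lt continuous_const Complex.continuous_re).inter isOpen_zetaDomain
  have hz₀ : 2 + Complex.I ∈ {s : ℂ | 1 < s.re} ∩ zetaDomain :=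
    ⟨by norm_num, by norm_num, by simp [Complex.le_def]⟩
  refine hlim.congr_right (hlim_an.eqOn_of_preconnected_of_eventuallyEq hζ_an
    isPreconnected_zetaDomain hz₀.2 (Filter.mem_of_superset (hV.mem_nhds hz₀) ?_))
  exact fun s ⟨hs1, hs⟩ => tendsto_nhds_unique (hlim.tendsto_at hs)
    ((tendsto_zetaApprox_riemannZeta hs1).comp (tendsto_add_atTop_nat 1))

theorem tendsto_sumLogSqRemainder :
    Tendsto (fun N => (sumLogSqRemainder N : ℂ)) atTop
      (𝓝 (iteratedDeriv 2 riemannZeta 0)) := by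
  have hderiv2 := ((tendstoLocallyUniformlyOn_zetaApprox_riemannZeta.deriv
    (Eventually.of_forall differentiableOn_zetaApprox) isOpen_zetaDomain).deriv
    (Eventually.of_forall fun N => (differentiableOn_zetaApprox N).deriv isOpen_zetaDomain)
    isOpen_zetaDomain).tendsto_at zero_mem_zetaDomain
  rw [iteratedDeriv_succ, iteratedDeriv_one]
  refine (tendsto_add_atTop_iff_nat 1).1 (hderiv2.congr fun N => ?_)
  exact_mod_cast deriv_deriv_zetaApprox_zero N.succ_ne_zero

theorem exists_tendsto_sumLogSqRemainder :
    ∃ Z : ℝ, Tendsto sumLogSqRemainder atTop (𝓝 Z) ∧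
      (Z : ℂ) = iteratedDeriv 2 riemannZeta 0 := by
  have h := tendsto_sumLogSqRemainder
  have him : (iteratedDeriv 2 riemannZeta 0).im = 0 :=
    tendsto_nhds_unique ((Complex.continuous_im.tendsto _).comp h)
      (by simpa only [Function.comp_def, Complex.ofReal_im] using tendsto_const_nhds)
  have hreal : ((iteratedDeriv 2 riemannZeta 0).re : ℂ) = iteratedDeriv 2 riemannZeta 0 :=
    Complex.ext (by simp) (by simp [him])
  exact ⟨_, by rw [← tendsto_ofReal_iff, hreal]; exact h, hreal⟩

/-! ### The series defining `S` -/

noncomputable def seriesTerm (x t : ℝ) : ℝ := log (x + t) ^ 2 - log t ^ 2 - 2 * x * log t / t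

theorem deningerS_eq_add_tsum (γ₁ x : ℝ) :
    deningerS γ₁ x = 2 * γ₁ * x + (log x ^ 2 + ∑' m : ℕ, seriesTerm x (m + 1)) := by
  rw [deningerS, add_assoc]
  rfl

theorem abs_seriesTerm_le {x t : ℝ} (hx : 0 ≤ x) (ht : 1 ≤ t) :
    |seriesTerm x t| ≤ (1 + 2 * log t) * (x / t) ^ 2 := by
  have ht0 : 0 < t := by linarith
  set u := x / t with hu
  have hu0 : 0 ≤ u := by positivity
  have hsplit : log (x + t) = log t + log (1 + u) := by
    rw [← log_mul ht0.ne' (by positivity), mul_add, mul_one, hu, mul_div_cancel₀ _ ht0.ne',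
      add_comm]
  have hupper : log (1 + u) ≤ u := by linarith [log_le_sub_one_of_pos (by positivity : 0 < 1 + u)]
  have hlower : u - u ^ 2 ≤ log (1 + u) := by
    have h := one_sub_inv_le_log_of_pos (by positivity : 0 < 1 + u)
    have : u - u ^ 2 ≤ 1 - (1 + u)⁻¹ := by
      rw [le_sub_iff_add_le, ← le_sub_iff_add_le', inv_le_iff_one_le_mul₀ (by positivity)]
      nlinarith [sq_nonneg u, mul_nonneg hu0 (sq_nonneg u)]
    linarith
  have hterm : seriesTerm x t = log (1 + u) ^ 2 - 2 * log t * (u - log (1 + u)) := by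
    rw [seriesTerm, hsplit, hu]
    field_simp
    ring
  have hlogt : 0 ≤ log t := log_nonneg ht
  rw [hterm, abs_le]
  constructor <;> nlinarith [mul_nonneg hlogt (sub_nonneg.2 hupper), log_nonneg
    (by linarith : (1 : ℝ) ≤ 1 + u)]

theorem summable_seriesTerm {x : ℝ} (hx : 0 ≤ x) :
    Summable fun m : ℕ => seriesTerm x (m + 1) := by
  have hsum : Summable fun m : ℕ => 5 * x ^ 2 * ((m : ℝ) + 1) ^ (-(3 / 2) : ℝ) := by
    have := (summable_nat_add_iff 1).2
      (Real.summable_nat_rpow.2 (by norm_num : -(3 / 2 : ℝ) < -1))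
    exact (this.mul_left (5 * x ^ 2)).congr fun m => by push_cast; rfl
  refine Summable.of_norm_bounded hsum fun m => ?_
  set t : ℝ := (m : ℝ) + 1
  have ht : 1 ≤ t := by simp [t]
  have ht0 : 0 < t := by linarith
  have hlog : log t ≤ 2 * t ^ (1 / 2 : ℝ) := by
    have := log_le_rpow_div ht0.le (by norm_num : (0 : ℝ) < 1 / 2)
    linarith
  have hone : 1 ≤ t ^ (1 / 2 : ℝ) := Real.one_le_rpow ht (by norm_num)
  have hsq : (x / t) ^ 2 = x ^ 2 * t ^ (-2 : ℝ) := by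
    rw [Real.rpow_neg ht0.le, Real.rpow_two, div_pow, div_eq_mul_inv]
  have hpow : t ^ (-(3 / 2) : ℝ) = t ^ (1 / 2 : ℝ) * t ^ (-2 : ℝ) := by
    rw [← Real.rpow_add ht0]
    norm_num
  rw [Real.norm_eq_abs, hpow]
  calc |seriesTerm x t| ≤ (1 + 2 * log t) * (x / t) ^ 2 := abs_seriesTerm_le hx ht
    _ ≤ 5 * t ^ (1 / 2 : ℝ) * (x ^ 2 * t ^ (-2 : ℝ)) := by
        rw [hsq]
        gcongr
        linarith
    _ = _ := by ring

/-! ### Summing the truncated series over `x = a / q` -/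

theorem sum_range_mul_eq {M : Type*} [AddCommMonoid M] (f : ℕ → M) (K q : ℕ) :
    ∑ n ∈ range (K * q), f n = ∑ k ∈ range K, ∑ b ∈ range q, f (k * q + b) := by
  induction K with
  | zero => simp
  | succ K ih => rw [Nat.succ_mul, sum_range_add, ih, sum_range_succ]

theorem sum_range_mul_add_one {M : Type*} [AddCommMonoid M] (f : ℕ → M) (K : ℕ) {q : ℕ}
    (hq : 0 < q) : ∑ n ∈ range (K * q), f (n + 1) =
      ∑ a ∈ range (q - 1), ∑ k ∈ range K, f (k * q + a + 1) +
        ∑ k ∈ range K, f ((k + 1) * q) := by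
  obtain ⟨r, rfl⟩ : ∃ r, q = r + 1 := ⟨q - 1, by omega⟩
  simp only [sum_range_mul_eq, sum_range_succ, sum_add_distrib, Nat.add_sub_cancel]
  rw [sum_comm]
  congr 1
  exact sum_congr rfl fun k _ => by congr 1; ring

theorem sum_range_log_div_sq (K : ℕ) {q : ℝ} (hq : 0 < q) :
    ∑ n ∈ range K, log ((n + 1) / q) ^ 2 =
      sumLogSq K - 2 * log q * log K.factorial + K * log q ^ 2 := by
  have hterm : ∀ n : ℕ, log ((n + 1) / q) ^ 2 =
      log (n + 1) ^ 2 - 2 * log q * log (n + 1) + log q ^ 2 := fun n => by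
    rw [log_div (by positivity) hq.ne']
    ring
  simp only [hterm, sum_add_distrib, sum_sub_distrib, ← mul_sum, sum_range_log_succ, sum_const,
    card_range, nsmul_eq_mul, sumLogSq]

theorem sum_range_two_mul_succ_div {q : ℕ} (hq : 0 < q) :
    ∑ a ∈ range (q - 1), 2 * (((a : ℝ) + 1) / q) = q - 1 := by
  obtain ⟨r, rfl⟩ : ∃ r, q = r + 1 := ⟨q - 1, by omega⟩
  clear hq
  have hgauss : ∑ a ∈ range r, ((a : ℝ) + 1) = r * (r + 1) / 2 := by
    induction r with
    | zero => simp
    | succ r ih => rw [sum_range_succ, ih]; push_cast; ring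
  rw [Nat.add_sub_cancel, ← mul_sum, ← sum_div, hgauss]
  push_cast
  field_simp
  ring

noncomputable def truncatedSum (q N : ℕ) : ℝ :=
  ∑ a ∈ range (q - 1),
    (log ((a + 1) / q) ^ 2 + ∑ m ∈ range N, seriesTerm ((a + 1) / q) (m + 1))

theorem truncatedSum_eq {q : ℕ} (hq : 0 < q) (N : ℕ) :
    truncatedSum q N = sumLogSq ((N + 1) * q) - 2 * log q * log ((N + 1) * q).factorial +
      ((N + 1) * q : ℕ) * log q ^ 2 - sumLogSq (N + 1) - (q - 1) * sumLogSq N -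
      (q - 1) * sumLogDiv N := by
  have hq' : (0 : ℝ) < q := by exact_mod_cast hq
  have hrow : ∀ a : ℕ,
      log ((a + 1) / q) ^ 2 + ∑ m ∈ range N, seriesTerm ((a + 1) / q) (m + 1) =
      ∑ k ∈ range (N + 1), log (((k * q + a + 1 : ℕ) : ℝ) / q) ^ 2 - sumLogSq N -
        2 * ((a + 1) / q) * sumLogDiv N := fun a => by
    have hshift : ∀ m : ℕ, (((m + 1) * q + a + 1 : ℕ) : ℝ) / q = (a + 1) / q + (m + 1) :=
      fun m => by push_cast; field_simp; ring
    simp only [sum_range_succ', hshift, seriesTerm, sum_sub_distrib, sumLogSq, sumLogDiv, mul_sum,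
      mul_div_assoc, zero_mul, zero_add]
    push_cast
    ring
  have hsplit := sum_range_mul_add_one (fun n : ℕ => log ((n : ℝ) / q) ^ 2) (N + 1) hq
  have hmult (k : ℕ) : log ((((k + 1) * q : ℕ) : ℝ) / q) ^ 2 = log (k + 1) ^ 2 := by
    push_cast
    rw [mul_div_cancel_right₀ _ hq'.ne']
  simp only [hmult, Nat.cast_add, Nat.cast_one] at hsplit
  rw [sum_range_log_div_sq _ hq', ← sumLogSq] at hsplit
  rw [truncatedSum, sum_congr rfl fun a _ => hrow a, sum_sub_distrib, sum_sub_distrib,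
    ← sum_mul, sum_range_two_mul_succ_div hq, sum_const, card_range, nsmul_eq_mul,
    Nat.cast_sub hq]
  push_cast at hsplit ⊢
  linarith

theorem tendsto_truncatedSum {γ₁ Z : ℝ}
    (hγ₁ : Tendsto (fun N : ℕ => sumLogDiv N - log N ^ 2 / 2) atTop (𝓝 γ₁))
    (hZ : Tendsto sumLogSqRemainder atTop (𝓝 Z)) {q : ℕ} (hq : 0 < q) :
    Tendsto (truncatedSum q) atTop
      (𝓝 (-(q - 1) * (Z + γ₁) - log q * log (2 * π) - log q ^ 2 / 2)) := by
  have hq' : (0 : ℝ) < q := by exact_mod_cast hq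
  have hM : Tendsto (fun N : ℕ => N + 1) atTop atTop := tendsto_add_atTop_nat 1
  have hMq : Tendsto (fun N : ℕ => (N + 1) * q) atTop atTop :=
    tendsto_atTop_mono (fun N => Nat.le_mul_of_pos_right _ hq) hM
  have hlogM : Tendsto (fun N : ℕ => log ((N + 1 : ℕ) : ℝ) / ((N + 1 : ℕ) : ℝ)) atTop
      (𝓝 0) :=
    Real.isLittleO_log_id_atTop.tendsto_div_nhds_zero.comp (tendsto_natCast_atTop_atTop.comp hM)
  have hform : ∀ N : ℕ, truncatedSum q N =
      sumLogSqRemainder ((N + 1) * q) - q * sumLogSqRemainder (N + 1) -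
        2 * log q * (log ((N + 1) * q).factorial -
          (((N + 1) * q : ℕ) * log ((N + 1) * q : ℕ) - ((N + 1) * q : ℕ) +
            log ((N + 1) * q : ℕ) / 2)) -
        log q ^ 2 / 2 - (q - 1) * (sumLogDiv (N + 1) - log (N + 1 : ℕ) ^ 2 / 2) +
        (q - 1) * (log (N + 1 : ℕ) / (N + 1 : ℕ)) := fun N => by
    have hlog : log (((N + 1) * q : ℕ) : ℝ) = log (N + 1 : ℕ) + log q := by
      rw [Nat.cast_mul, log_mul (by positivity) hq'.ne']
    have hP : sumLogSq (N + 1) = sumLogSq N + log ((N : ℝ) + 1) ^ 2 := sum_range_succ _ _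
    have hR : sumLogDiv (N + 1) = sumLogDiv N + log ((N : ℝ) + 1) / ((N : ℝ) + 1) :=
      sum_range_succ _ _
    rw [truncatedSum_eq hq, sumLogSqRemainder, sumLogSqRemainder, hlog, hP, hR]
    push_cast
    field_simp
    ring
  have hlim := (((((hZ.comp hMq).sub ((hZ.comp hM).const_mul (q : ℝ))).sub
    ((tendsto_log_factorial_sub.comp hMq).const_mul (2 * log q))).sub
    (tendsto_const_nhds (x := log q ^ 2 / 2))).sub
    ((hγ₁.comp hM).const_mul ((q : ℝ) - 1))).add (hlogM.const_mul ((q : ℝ) - 1))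
  rw [mul_zero, add_zero] at hlim
  convert hlim.congr fun N => (hform N).symm using 2
  ring

theorem sum_deningerS_eq {γ₁ Z : ℝ}
    (hγ₁ : Tendsto (fun N : ℕ => ∑ j ∈ Icc 1 N, log j / j - log N ^ 2 / 2) atTop
      (𝓝 γ₁))
    (hZ : Tendsto sumLogSqRemainder atTop (𝓝 Z)) {q : ℕ} (hq : 0 < q) :
    ∑ a ∈ Icc 1 (q - 1), deningerS γ₁ (a / q) =
      -(q - 1) * Z - log q * log (2 * π) - log q ^ 2 / 2 := by
  have hlim : Tendsto (truncatedSum q) atTop (𝓝 (∑ a ∈ range (q - 1),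
      (log ((a + 1) / q) ^ 2 + ∑' m : ℕ, seriesTerm ((a + 1) / q) (m + 1)))) :=
    tendsto_finsetSum _ fun a _ => tendsto_const_nhds.add
      (summable_seriesTerm (by positivity)).hasSum.tendsto_sum_nat
  have hγsum : ∑ a ∈ range (q - 1), 2 * γ₁ * (((a : ℝ) + 1) / q) = γ₁ * (q - 1) := by
    rw [← sum_range_two_mul_succ_div hq, mul_sum]
    exact sum_congr rfl fun a _ => by ring
  have hγ : Tendsto (fun N : ℕ => sumLogDiv N - log N ^ 2 / 2) atTop (𝓝 γ₁) := by
    simpa [sum_Icc_one_eq_sum_range, sumLogDiv] using hγ₁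
  rw [sum_Icc_one_eq_sum_range]
  simp only [Nat.cast_add, Nat.cast_one, deningerS_eq_add_tsum, sum_add_distrib, hγsum,
    tendsto_nhds_unique hlim (tendsto_truncatedSum hγ hZ hq)]
  ring

end Deninger

theorem sum_S_eq_general (γ₁ : ℝ)
    (hγ₁ : Filter.Tendsto
      (fun N : ℕ => (∑ j ∈ Finset.Icc 1 N, Real.log j / j) - (Real.log N) ^ 2 / 2)
      Filter.atTop (nhds γ₁))
    (q : ℕ) (hq : q.Prime) :
    ((∑ a ∈ Finset.Icc 1 (q - 1), deningerS γ₁ ((a : ℝ) / q) : ℝ) : ℂ) =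
      -(iteratedDeriv 2 riemannZeta 0) * ((q : ℂ) - 1) -
        (Real.log q : ℂ) * (Real.log (2 * Real.pi) : ℂ) -
        (Real.log q : ℂ) ^ 2 / 2 := by
  obtain ⟨Z, hZ, hZζ⟩ := Deninger.exists_tendsto_sumLogSqRemainder
  rw [Deninger.sum_deningerS_eq hγ₁ hZ hq.pos, ← hZζ]
  push_cast
  ring

theorem sum_S_eq (γ₁ : ℝ)
    (hγ₁ : Filter.Tendsto
      (fun N : ℕ => (∑ j ∈ Finset.Icc 1 N, Real.log j / j) - (Real.log N) ^ 2 / 2)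
      Filter.atTop (nhds γ₁))
    (q : ℕ) (hq : q.Prime) (hodd : Odd q) :
    ((∑ a ∈ Finset.Icc 1 (q - 1), deningerS γ₁ ((a : ℝ) / q) : ℝ) : ℂ) =
      -(iteratedDeriv 2 riemannZeta 0) * ((q : ℂ) - 1) -
        (Real.log q : ℂ) * (Real.log (2 * Real.pi) : ℂ) -
        (Real.log q : ℂ) ^ 2 / 2 :=
  sum_S_eq_general γ₁ hγ₁ q hq
end
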